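/- Let X be a rack containing elements x_0,...,x_{k-1} satisfying the cyclic Fibonacci relation x_{i+2} = x_i * x_{i+1} with indices modulo k. Then the map h_s: C_n^R(X) → C_{n+2}^R(X), sending a generator w to Σ_{i=0}^{k-1} (w, x_i, x_{i+1}), is a chain map. -/

import Mathlib

/-! Appending a letter `a` to a chain satisfies `∂ h_a = h_a ∂ + (-1)^n (1 - *_a)`, and
`*_b h_a = h_{a*b} *_b`. Hence `∂ h_b h_a - h_b h_a ∂ = ±((h_b - h_a) + (h_{a*b} *_b - h_b *_a))`.
For `(a, b) = (x_i, x_{i+1})` the Fibonacci relation gives `a * b = x_{i+2}`, so both differences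
telescope to zero when summed around the cycle `ZMod k`. -/

/-- Delete the `i`-th coordinate of a tuple. -/
def delF {X : Type*} {n : ℕ} (i : Fin (n + 1)) (x : Fin (n + 1) → X) : Fin n → X :=
  fun j => x (i.succAbove j)

/-- Delete the `i`-th coordinate, acting by `* x_i` on the earlier coordinates. -/
def delS {X : Type*} (op : X → X → X) {n : ℕ} (i : Fin (n + 1)) (x : Fin (n + 1) → X) :
    Fin n → X :=
  fun j => if (j : ℕ) < (i : ℕ) then op (x (Fin.castSucc j)) (x i) else x (i.succAbove j)

/-- The rack boundary of a generator (tuples indexed from 0; the paper's index `i ∈ {2,…,n}`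
corresponds to `i ∈ {1,…,n}` here, with sign `(-1)^(i+1)`). -/
noncomputable def bdryGen {X : Type*} (op : X → X → X) {n : ℕ} (x : Fin (n + 1) → X) :
    (Fin n → X) →₀ ℤ :=
  ∑ i : Fin (n + 1), if (i : ℕ) = 0 then 0 else
    ((-1 : ℤ) ^ ((i : ℕ) + 1)) •
      (Finsupp.single (delF i x) 1 - Finsupp.single (delS op i x) 1)

/-- The rack boundary map `∂ : C^R_{n+1}(X) → C^R_n(X)`. -/
noncomputable def bdry {X : Type*} (op : X → X → X) (n : ℕ) :
    ((Fin (n + 1) → X) →₀ ℤ) →ₗ[ℤ] ((Fin n → X) →₀ ℤ) :=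
  Finsupp.lsum ℤ fun x => LinearMap.toSpanSingleton ℤ _ (bdryGen op x)

/-- The chain map `*_a`, applying `* a` to every coordinate. -/
noncomputable def starMap {X : Type*} (op : X → X → X) (a : X) (m : ℕ) :
    ((Fin m → X) →₀ ℤ) →ₗ[ℤ] ((Fin m → X) →₀ ℤ) :=
  Finsupp.lsum ℤ fun x =>
    LinearMap.toSpanSingleton ℤ _ (Finsupp.single (fun j => op (x j) a) 1)

/-- The map `h_a`, appending `a` as the last coordinate. -/
noncomputable def hmap {X : Type*} (a : X) (m : ℕ) :
    ((Fin m → X) →₀ ℤ) →ₗ[ℤ] ((Fin (m + 1) → X) →₀ ℤ) :=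
  Finsupp.lsum ℤ fun x => LinearMap.toSpanSingleton ℤ _ (Finsupp.single (Fin.snoc x a) 1)

lemma sum_sub_add_right_eq_zero {G M : Type*} [AddGroup G] [Fintype G] [AddCommGroup M]
    (f : G → M) (g : G) : ∑ i, (f (i + g) - f i) = 0 := by
  rw [Finset.sum_sub_distrib,
    Fintype.sum_equiv (Equiv.addRight g) (fun i => f (i + g)) f fun _ => rfl, sub_self]

section

variable {X : Type*} (op : X → X → X)

lemma delF_castSucc_snoc {n : ℕ} (i : Fin (n + 1)) (w : Fin (n + 1) → X) (a : X) :
    delF i.castSucc (Fin.snoc w a) = Fin.snoc (delF i w) a := by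
  funext j
  refine Fin.lastCases ?_ (fun r => ?_) j
  · simp [delF, Fin.succAbove_ne_last_last (Fin.castSucc_ne_last i)]
  · simp [delF, Fin.castSucc_succAbove_castSucc]

lemma delS_castSucc_snoc {n : ℕ} (i : Fin (n + 1)) (w : Fin (n + 1) → X) (a : X) :
    delS op i.castSucc (Fin.snoc w a) = Fin.snoc (delS op i w) a := by
  funext j
  refine Fin.lastCases ?_ (fun r => ?_) j
  · simp [delS, Fin.succAbove_ne_last_last (Fin.castSucc_ne_last i), not_lt.2 i.is_le]
  · simp [delS, Fin.castSucc_succAbove_castSucc]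

lemma delF_last_snoc {n : ℕ} (w : Fin n → X) (a : X) :
    delF (Fin.last n) (Fin.snoc w a) = w := by
  funext j
  simp [delF]

lemma delS_last_snoc {n : ℕ} (w : Fin n → X) (a : X) :
    delS op (Fin.last n) (Fin.snoc w a) = fun j => op (w j) a := by
  funext j
  simp [delS]

lemma hmap_single (a : X) {m : ℕ} (w : Fin m → X) (c : ℤ) :
    hmap a m (Finsupp.single w c) = Finsupp.single (Fin.snoc w a) c := by
  simp [hmap]

lemma starMap_single (a : X) {m : ℕ} (w : Fin m → X) (c : ℤ) :
    starMap op a m (Finsupp.single w c) = Finsupp.single (fun j => op (w j) a) c := by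
  simp [starMap]

lemma bdry_single {n : ℕ} (w : Fin (n + 1) → X) :
    bdry op n (Finsupp.single w 1) = bdryGen op w := by
  simp [bdry]

lemma bdryGen_snoc {n : ℕ} (w : Fin (n + 1) → X) (a : X) :
    bdryGen op (Fin.snoc w a) = hmap a n (bdryGen op w) +
      (-1 : ℤ) ^ n • (Finsupp.single w 1 - Finsupp.single (fun j => op (w j) a) 1) := by
  rw [bdryGen, Fin.sum_univ_castSucc, bdryGen, map_sum]
  congr 1
  · refine Finset.sum_congr rfl fun i _ => ?_
    split_ifs <;> simp_all [hmap_single, delF_castSucc_snoc, delS_castSucc_snoc]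
  · simp [delF_last_snoc, delS_last_snoc, pow_succ, smul_sub]

lemma bdry_comp_hmap (a : X) (n : ℕ) :
    bdry op (n + 1) ∘ₗ hmap a (n + 1) =
      hmap a n ∘ₗ bdry op n + (-1 : ℤ) ^ n • (LinearMap.id - starMap op a (n + 1)) := by
  refine Finsupp.lhom_ext' fun w => LinearMap.ext_ring ?_
  simp only [LinearMap.comp_apply, Finsupp.lsingle_apply, LinearMap.add_apply,
    LinearMap.smul_apply, LinearMap.sub_apply, LinearMap.id_apply, hmap_single, bdry_single,
    starMap_single, bdryGen_snoc]

lemma starMap_comp_hmap (a b : X) (m : ℕ) :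
    starMap op b (m + 1) ∘ₗ hmap a m = hmap (op a b) m ∘ₗ starMap op b m := by
  refine Finsupp.lhom_ext' fun w => LinearMap.ext_ring ?_
  simp only [LinearMap.comp_apply, Finsupp.lsingle_apply, hmap_single, starMap_single]
  congr 1
  funext j
  refine Fin.lastCases ?_ (fun r => ?_) j <;> simp

lemma bdry_comp_hmap_comp_hmap (a b : X) (n : ℕ) :
    bdry op (n + 2) ∘ₗ hmap b (n + 2) ∘ₗ hmap a (n + 1) =
      (hmap b (n + 1) ∘ₗ hmap a n) ∘ₗ bdry op n + (-1 : ℤ) ^ n •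
        ((hmap b (n + 1) - hmap a (n + 1)) +
          (hmap (op a b) (n + 1) ∘ₗ starMap op b (n + 1) -
            hmap b (n + 1) ∘ₗ starMap op a (n + 1))) := by
  rw [← LinearMap.comp_assoc, bdry_comp_hmap, LinearMap.add_comp, LinearMap.comp_assoc,
    bdry_comp_hmap, LinearMap.smul_comp, LinearMap.sub_comp, starMap_comp_hmap,
    LinearMap.comp_add, LinearMap.comp_smul, LinearMap.comp_sub, pow_succ]
  simp only [LinearMap.id_comp, LinearMap.comp_id, LinearMap.comp_assoc]
  module

lemma sum_hmap_comp_hmap {ι : Type*} [Fintype ι] (a b : ι → X) (m : ℕ) :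
    ∑ i, hmap (b i) (m + 1) ∘ₗ hmap (a i) m = Finsupp.lsum ℤ fun w =>
      LinearMap.toSpanSingleton ℤ _
        (∑ i, Finsupp.single (Fin.snoc (Fin.snoc w (a i)) (b i) : Fin (m + 2) → X) (1 : ℤ)) := by
  refine Finsupp.lhom_ext' fun w => LinearMap.ext_ring ?_
  simp [hmap_single]

lemma sum_fibonacci_correction_eq_zero {k : ℕ} [NeZero k] (x : ZMod k → X)
    (hfib : ∀ i : ZMod k, x (i + 2) = op (x i) (x (i + 1))) (m : ℕ) :
    ∑ i : ZMod k, ((hmap (x (i + 1)) m - hmap (x i) m) +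
      (hmap (op (x i) (x (i + 1))) m ∘ₗ starMap op (x (i + 1)) m -
        hmap (x (i + 1)) m ∘ₗ starMap op (x i) m)) = 0 := by
  have hfib_succ_succ : ∀ i, op (x i) (x (i + 1)) = x (i + 1 + 1) := fun i => by
    rw [add_assoc, one_add_one_eq_two, hfib]
  simp only [hfib_succ_succ]
  rw [Finset.sum_add_distrib, sum_sub_add_right_eq_zero (fun i => hmap (x i) m),
    sum_sub_add_right_eq_zero (fun i => hmap (x (i + 1)) m ∘ₗ starMap op (x i) m), add_zero]

end

theorem hs_chain_map_general {X : Type*} (op : X → X → X)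
    (k : ℕ) [NeZero k] (x : ZMod k → X)
    (hfib : ∀ i : ZMod k, x (i + 2) = op (x i) (x (i + 1)))
    (hs : ∀ m : ℕ, ((Fin m → X) →₀ ℤ) →ₗ[ℤ] ((Fin (m + 2) → X) →₀ ℤ))
    (hsdef : ∀ m : ℕ, hs m = Finsupp.lsum ℤ fun w =>
      LinearMap.toSpanSingleton ℤ _
        (∑ i : ZMod k, Finsupp.single ((Fin.snoc (Fin.snoc w (x i)) (x (i + 1))) : Fin (m + 2) → X) (1 : ℤ)))
    (n : ℕ) :
    (bdry op (n + 2)) ∘ₗ (hs (n + 1)) = (hs n) ∘ₗ (bdry op n) := by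
  rw [hsdef, hsdef, ← sum_hmap_comp_hmap, ← sum_hmap_comp_hmap]
  calc bdry op (n + 2) ∘ₗ ∑ i, hmap (x (i + 1)) (n + 2) ∘ₗ hmap (x i) (n + 1)
      = ∑ i, bdry op (n + 2) ∘ₗ hmap (x (i + 1)) (n + 2) ∘ₗ hmap (x i) (n + 1) :=
        map_sum (LinearMap.llcomp ℤ ((Fin (n + 1) → X) →₀ ℤ) _ _ (bdry op (n + 2))) _ _
    _ = ∑ i, (hmap (x (i + 1)) (n + 1) ∘ₗ hmap (x i) n) ∘ₗ bdry op n := by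
        simp_rw [bdry_comp_hmap_comp_hmap, Finset.sum_add_distrib, ← Finset.smul_sum,
          sum_fibonacci_correction_eq_zero op x hfib, smul_zero, add_zero]
    _ = (∑ i, hmap (x (i + 1)) (n + 1) ∘ₗ hmap (x i) n) ∘ₗ bdry op n :=
        (map_sum (LinearMap.lcomp ℤ ((Fin (n + 2) → X) →₀ ℤ) (bdry op n))
          (fun i => hmap (x (i + 1)) (n + 1) ∘ₗ hmap (x i) n) Finset.univ).symm

/-- The homomorphism `h_s : C^R_n(X) → C^R_{n+2}(X)`, appending `(x_i, x_{i+1})`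
summed over a cyclic Fibonacci family `x_0, …, x_{k-1}` (indices mod `k`,
`x_{i+2} = x_i * x_{i+1}`), is a chain map. -/
theorem hs_chain_map {X : Type*} (op : X → X → X)
    (hbij : ∀ b : X, Function.Bijective fun a => op a b)
    (hdist : ∀ a b c : X, op (op a b) c = op (op a c) (op b c))
    (k : ℕ) [NeZero k] (x : ZMod k → X)
    (hfib : ∀ i : ZMod k, x (i + 2) = op (x i) (x (i + 1)))
    (hs : ∀ m : ℕ, ((Fin m → X) →₀ ℤ) →ₗ[ℤ] ((Fin (m + 2) → X) →₀ ℤ))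
    (hsdef : ∀ m : ℕ, hs m = Finsupp.lsum ℤ fun w =>
      LinearMap.toSpanSingleton ℤ _
        (∑ i : ZMod k, Finsupp.single ((Fin.snoc (Fin.snoc w (x i)) (x (i + 1))) : Fin (m + 2) → X) (1 : ℤ)))
    (n : ℕ) :
    (bdry op (n + 2)) ∘ₗ (hs (n + 1)) = (hs n) ∘ₗ (bdry op n) :=
  hs_chain_map_general op k x hfib hs hsdef n
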